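/- arXiv:1609.09264 — 5 statements merged into one kernel-verified Lean document; each statement's English description precedes it below -/
import Mathlib

section
/- For every natural number n > 144, one has (1/12) · ∑_{d ∣ n} d·φ(d)·φ(n/d) > ∑_{d ∣ n} φ(d)·φ(n/d), where φ is Euler's totient function. Equivalently, ∑_{d ∣ n} d·φ(d)·φ(n/d) > 12 · ∑_{d ∣ n} φ(d)·φ(n/d). -/
/-! Pairing the divisor `d` with `n / d` turns twice the right-hand side into
`∑ (d + n / d) φ(d) φ(n / d)`, and `d + n / d ≥ 2 √n > 24` once `n > 144`. -/

open Finset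

lemma Nat.two_mul_sum_divisors_mul_eq_sum_add (n : ℕ) (g : ℕ → ℕ → ℕ)
    (hg : ∀ a b, g a b = g b a) :
    2 * ∑ d ∈ n.divisors, d * g d (n / d) = ∑ d ∈ n.divisors, (d + n / d) * g d (n / d) := by
  have hswap : ∑ d ∈ n.divisors, d * g d (n / d) = ∑ d ∈ n.divisors, n / d * g d (n / d) := by
    rw [← Nat.sum_div_divisors n fun d => d * g d (n / d)]
    refine sum_congr rfl fun d hd => ?_
    rw [Nat.div_div_self (Nat.dvd_of_mem_divisors hd) (Nat.ne_zero_of_mem_divisors hd), hg]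
  rw [two_mul]
  nth_rewrite 2 [hswap]
  rw [← sum_add_distrib]
  simp only [add_mul]

lemma Nat.two_mul_lt_add_div_of_mem_divisors {k n d : ℕ} (hd : d ∈ n.divisors) (hk : k ^ 2 < n) :
    2 * k < d + n / d := by
  obtain ⟨e, rfl⟩ := Nat.dvd_of_mem_divisors hd
  rw [Nat.mul_div_cancel_left e (Nat.pos_of_mem_divisors hd)]
  nlinarith [sq_nonneg ((d : ℤ) - e)]

theorem stmt_0 (n : ℕ) (hn : 144 < n) :
    12 * ∑ d ∈ n.divisors, Nat.totient d * Nat.totient (n / d) <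
      ∑ d ∈ n.divisors, d * Nat.totient d * Nat.totient (n / d) := by
  have hn0 : n ≠ 0 := by omega
  have hpair := Nat.two_mul_sum_divisors_mul_eq_sum_add n (fun a b => a.totient * b.totient)
    fun a b => mul_comm _ _
  have hlt : ∑ d ∈ n.divisors, 24 * (d.totient * (n / d).totient)
      < ∑ d ∈ n.divisors, (d + n / d) * (d.totient * (n / d).totient) := by
    refine sum_lt_sum_of_nonempty (Nat.nonempty_divisors.mpr hn0) fun d hd => ?_
    have hpos : 0 < n / d := Nat.div_pos (Nat.divisor_le hd) (Nat.pos_of_mem_divisors hd)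
    exact Nat.mul_lt_mul_of_pos_right (Nat.two_mul_lt_add_div_of_mem_divisors (k := 12) hd hn)
      (Nat.mul_pos (Nat.totient_pos.mpr (Nat.pos_of_mem_divisors hd)) (Nat.totient_pos.mpr hpos))
  simp only [← mul_sum, mul_assoc] at hpair hlt ⊢
  omega
end

section
/- A natural number n satisfies ∑_{d ∣ n} d·φ(d)·φ(n/d) = 12 · ∑_{d ∣ n} φ(d)·φ(n/d) if and only if n ∈ {23, 32, 33, 35, 40, 42}. -/
/-! Pairing the divisor `d` with `n / d` gives
`2 ∑ d φ(d) φ(n/d) = ∑ (d + n/d) φ(d) φ(n/d)`, and `d + n/d ≥ 2√n > 24` once `n > 144`, so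
for such `n` the left side is strictly larger than `12 ∑ φ(d) φ(n/d)`. The finitely many
`n ≤ 144` are checked by computation. -/

set_option maxRecDepth 10000

namespace Nat

lemma two_mul_lt_add_of_mul_lt_mul {a b m : ℕ} (h : m * m < a * b) : 2 * m < a + b := by
  by_contra! hle
  nlinarith [Nat.mul_self_le_mul_self hle, sq_nonneg ((a : ℤ) - b)]

lemma sum_divisors_comm {M : Type*} [AddCommMonoid M] (n : ℕ) (f : ℕ → ℕ → M) :
    ∑ d ∈ n.divisors, f d (n / d) = ∑ d ∈ n.divisors, f (n / d) d :=
  (sum_divisorsAntidiagonal f).symm.trans (sum_divisorsAntidiagonal' f)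

lemma two_mul_sum_mul_totient_mul_totient_div (n : ℕ) :
    2 * ∑ d ∈ n.divisors, d * φ d * φ (n / d) =
      ∑ d ∈ n.divisors, (d + n / d) * (φ d * φ (n / d)) := by
  rw [two_mul]
  nth_rw 2 [sum_divisors_comm n fun a b => a * φ a * φ b]
  rw [← Finset.sum_add_distrib]
  exact Finset.sum_congr rfl fun d _ => by ring

lemma mul_sum_totient_mul_totient_div_lt {m n : ℕ} (h : m * m < n) :
    m * ∑ d ∈ n.divisors, φ d * φ (n / d) < ∑ d ∈ n.divisors, d * φ d * φ (n / d) := by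
  have hn : n ≠ 0 := by omega
  suffices 2 * m * ∑ d ∈ n.divisors, φ d * φ (n / d) <
      2 * ∑ d ∈ n.divisors, d * φ d * φ (n / d) by
    rw [mul_assoc] at this
    exact Nat.lt_of_mul_lt_mul_left this
  rw [two_mul_sum_mul_totient_mul_totient_div, Finset.mul_sum]
  refine Finset.sum_lt_sum_of_nonempty (nonempty_divisors.2 hn) fun d hd => ?_
  obtain ⟨hdvd, -⟩ := mem_divisors.1 hd
  have hd0 : 0 < d := pos_of_dvd_of_pos hdvd (by omega)
  have hnd0 : 0 < n / d := Nat.div_pos (le_of_dvd (by omega) hdvd) hd0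
  refine Nat.mul_lt_mul_of_pos_right ?_ (Nat.mul_pos (totient_pos.2 hd0) (totient_pos.2 hnd0))
  exact two_mul_lt_add_of_mul_lt_mul (by rwa [Nat.mul_div_cancel' hdvd])

end Nat

theorem stmt_2 (n : ℕ) (hn : 0 < n) :
    (∑ d ∈ n.divisors, d * Nat.totient d * Nat.totient (n / d) =
      12 * ∑ d ∈ n.divisors, Nat.totient d * Nat.totient (n / d)) ↔
    n ∈ ({23, 32, 33, 35, 40, 42} : Finset ℕ) := by
  rcases le_or_gt n 144 with hsmall | hlarge
  · interval_cases n <;> decide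
  · have hne := (Nat.mul_sum_totient_mul_totient_div_lt (m := 12) hlarge).ne'
    simp only [hne, false_iff, Finset.mem_insert, Finset.mem_singleton]
    omega
end

section
/- For every natural number D > 24, there exist infinitely many primes p such that D does not divide (p − 1)(p + 1). -/
/-!
If `D > 24` then `D ∤ 24`, so `D` is divisible by `16`, by `9` or by a prime `q ≥ 5`. For such a
divisor `d` pick a unit `a` modulo `d` with `a ≢ ±1`: `3` modulo `16`, `2` modulo `9` and `2`
modulo `q`. By Dirichlet's theorem infinitely many primes `p` satisfy `p ≡ a (mod d)`, and for
those `d ∤ (p - 1) * (p + 1)`, hence `D ∤ (p - 1) * (p + 1)`.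
-/

theorem ZMod.natCast_ne_zero_of_pos_of_lt {q n : ℕ} (hn : 0 < n) (hnq : n < q) :
    (n : ZMod q) ≠ 0 := by
  rw [Ne, ZMod.natCast_eq_zero_iff]
  exact Nat.not_dvd_of_pos_of_lt hn hnq

namespace Nat

theorem not_dvd_sub_one_mul_add_one_of_cast_eq {d p : ℕ} {a : ZMod d} (hp : 1 ≤ p)
    (hpa : (p : ZMod d) = a) (ha : (a - 1) * (a + 1) ≠ 0) : ¬ d ∣ (p - 1) * (p + 1) := by
  rw [← ZMod.natCast_eq_zero_iff]
  push_cast [hp, hpa]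
  exact ha

theorem infinite_setOf_prime_and_not_dvd_sub_one_mul_add_one {D d : ℕ} [NeZero d]
    (hdD : d ∣ D) {a : ZMod d} (ha : IsUnit a) (ha' : (a - 1) * (a + 1) ≠ 0) :
    {p : ℕ | p.Prime ∧ ¬ D ∣ (p - 1) * (p + 1)}.Infinite :=
  (infinite_setOfPred_prime_and_eq_mod ha).mono fun _ hp =>
    ⟨hp.1, fun h => not_dvd_sub_one_mul_add_one_of_cast_eq hp.1.one_le hp.2 ha' (hdD.trans h)⟩

theorem dvd_twentyFour_of_not_sixteen_dvd_of_not_nine_dvd {D : ℕ} (h16 : ¬ 16 ∣ D)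
    (h9 : ¬ 9 ∣ D) (hq : ∀ q, q.Prime → q ∣ D → q < 5) : D ∣ 24 := by
  refine (dvd_iff_prime_pow_dvd_dvd 24 D).2 fun p k hp hpk => ?_
  rcases k.eq_zero_or_pos with rfl | hk
  · simp
  have hp5 := hq p hp ((dvd_pow_self p hk.ne').trans hpk)
  have hp2 := hp.two_le
  interval_cases p
  · have hk3 : k ≤ 3 := by
      by_contra! hk
      exact h16 ((pow_dvd_pow 2 hk).trans hpk)
    exact (pow_dvd_pow 2 hk3).trans (by norm_num)
  · have hk1 : k ≤ 1 := by
      by_contra! hk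
      exact h9 ((pow_dvd_pow 3 hk).trans hpk)
    exact (pow_dvd_pow 3 hk1).trans (by norm_num)
  · norm_num at hp

theorem sixteen_dvd_or_nine_dvd_or_exists_prime_five_le_dvd {D : ℕ} (hD : 24 < D) :
    16 ∣ D ∨ 9 ∣ D ∨ ∃ q, q.Prime ∧ 5 ≤ q ∧ q ∣ D := by
  by_contra! h
  obtain ⟨h16, h9, hq⟩ := h
  have hD24 := dvd_twentyFour_of_not_sixteen_dvd_of_not_nine_dvd h16 h9 fun q hq' hqD => by
    have := hq q hq'
    omega
  have := le_of_dvd (by norm_num) hD24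
  omega

end Nat

theorem stmt_6 (D : ℕ) (hD : 24 < D) :
    {p : ℕ | p.Prime ∧ ¬ D ∣ (p - 1) * (p + 1)}.Infinite := by
  rcases Nat.sixteen_dvd_or_nine_dvd_or_exists_prime_five_le_dvd hD with
    h16 | h9 | ⟨q, hq, hq5, hqD⟩
  · exact Nat.infinite_setOf_prime_and_not_dvd_sub_one_mul_add_one (a := 3) h16
      (by decide) (by decide)
  · exact Nat.infinite_setOf_prime_and_not_dvd_sub_one_mul_add_one (a := 2) h9
      (by decide) (by decide)
  · have : Fact q.Prime := ⟨hq⟩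
    have h2 : ((2 : ℕ) : ZMod q) ≠ 0 := ZMod.natCast_ne_zero_of_pos_of_lt two_pos (by omega)
    have h3 : ((3 : ℕ) : ZMod q) ≠ 0 := ZMod.natCast_ne_zero_of_pos_of_lt three_pos (by omega)
    refine Nat.infinite_setOf_prime_and_not_dvd_sub_one_mul_add_one hqD h2.isUnit ?_
    convert h3 using 1
    push_cast
    ring
end

section
/- Let k be an algebraically closed field, a and b coprime positive integers, and u, v ∈ k^× both nonzero. Then the image of the morphism 𝔾_m → 𝔸² − {0}, λ ↦ (λ^a·u, λ^b·v), is a closed subset of 𝔸² − {0}. Moreover, its closure A in 𝔸² is an irreducible closed subset of dimension 1, cut out by a single irreducible polynomial q ∈ k[x,y] that is homogeneous of some positive degree j for the grading with deg x = a, deg y = b. -/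
set_option maxRecDepth 10000

open Polynomial

lemma auxA (F : Type*) [Field F] (n m : ℕ) (hn : Odd n) (hm : 0 < m)
    (hco : Nat.Coprime n m) (c : F) (hc : c ≠ 0) :
    Irreducible (X ^ n - C (C c * X ^ m) : (Polynomial F)[X]) := by
  have hn0 : n ≠ 0 := by rintro rfl; simp at hn
  have hmonic : (X ^ n - C (C c * X ^ m) : (Polynomial F)[X]).Monic :=
    monic_X_pow_sub_C _ hn0
  rw [hmonic.irreducible_iff_irreducible_map_fraction_map (K := RatFunc F)]
  rw [Polynomial.map_sub, Polynomial.map_pow, Polynomial.map_X, Polynomial.map_C]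
  apply X_pow_sub_C_irreducible_of_odd hn
  intro p hp hpn e he
  -- e is integral over F[Y]
  have hint : IsIntegral (Polynomial F) e := by
    refine ⟨X ^ p - C (C c * X ^ m), monic_X_pow_sub_C _ hp.ne_zero, ?_⟩
    simp [eval₂_sub, he]
  obtain ⟨g, hg⟩ := IsIntegrallyClosed.isIntegral_iff.mp hint
  rw [← hg, ← map_pow] at he
  have hinj := IsFractionRing.injective (Polynomial F) (RatFunc F)
  have hgp : g ^ p = C c * X ^ m := hinj he
  have hdeg : p * g.natDegree = m := by
    have := congrArg natDegree hgp
    rwa [natDegree_pow, natDegree_C_mul (by exact_mod_cast hc), natDegree_X_pow] at this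
  have hpm : p ∣ m := ⟨g.natDegree, hdeg.symm⟩
  have h1 : p ∣ 1 := hco ▸ Nat.dvd_gcd hpn hpm
  exact hp.one_lt.ne' (Nat.eq_one_of_dvd_one h1)

open MvPolynomial in
lemma auxB (F : Type*) [Field F] (n m : ℕ) (hn : Odd n) (hm : 0 < m)
    (hco : Nat.Coprime n m) (c d : F) (hc : c ≠ 0) (hd : d ≠ 0) :
    Irreducible (MvPolynomial.C c * X 0 ^ n - MvPolynomial.C d * X 1 ^ m :
      MvPolynomial (Fin 2) F) := by
  classical
  let E2 : MvPolynomial (Fin 1) F ≃+* F[X] :=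
    (MvPolynomial.finSuccEquiv F 0).toRingEquiv.trans
      (Polynomial.mapEquiv (isEmptyRingEquiv F (Fin 0)))
  let E : MvPolynomial (Fin 2) F ≃+* (F[X])[X] :=
    (MvPolynomial.finSuccEquiv F 1).toRingEquiv.trans (Polynomial.mapEquiv E2)
  rw [← MulEquiv.irreducible_iff (E : MvPolynomial (Fin 2) F ≃* (F[X])[X])]
  have hX1 : (X 1 : MvPolynomial (Fin 2) F) = X (Fin.succ 0) := rfl
  -- step 1 : finSuccEquiv
  have hC1 : ∀ r : F, (MvPolynomial.finSuccEquiv F 1) (MvPolynomial.C r)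
      = Polynomial.C (MvPolynomial.C r) := by
    intro r
    rw [finSuccEquiv_apply, eval₂Hom_C, RingHom.comp_apply]
  have s1 : (MvPolynomial.finSuccEquiv F 1)
      (MvPolynomial.C c * X 0 ^ n - MvPolynomial.C d * X 1 ^ m)
      = Polynomial.C (MvPolynomial.C c) * Polynomial.X ^ n
        - Polynomial.C (MvPolynomial.C d * MvPolynomial.X 0 ^ m) := by
    rw [map_sub, map_mul, map_mul, map_pow, map_pow, finSuccEquiv_X_zero, hX1,
      finSuccEquiv_X_succ, hC1, hC1, ← Polynomial.C_pow, ← Polynomial.C_mul]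
  -- step 2 : E2 on coefficients
  have hE2C : ∀ r : F, E2 (MvPolynomial.C r) = Polynomial.C r := by
    intro r
    show Polynomial.map _ ((MvPolynomial.finSuccEquiv F 0) (MvPolynomial.C r)) = _
    rw [finSuccEquiv_apply, eval₂Hom_C, RingHom.comp_apply, Polynomial.map_C]
    simp
    exact MvPolynomial.coeff_zero_C r
  have hE2X : E2 (MvPolynomial.X 0) = Polynomial.X := by
    show Polynomial.map _ ((MvPolynomial.finSuccEquiv F 0) (MvPolynomial.X 0)) = _
    rw [finSuccEquiv_X_zero, Polynomial.map_X]
  have hE : E (MvPolynomial.C c * X 0 ^ n - MvPolynomial.C d * X 1 ^ m) =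
      Polynomial.C (Polynomial.C c) * Polynomial.X ^ n
        - Polynomial.C (Polynomial.C d * Polynomial.X ^ m) := by
    show Polynomial.map (E2 : MvPolynomial (Fin 1) F →+* F[X]) _ = _
    erw [s1]
    rw [Polynomial.map_sub, Polynomial.map_mul, Polynomial.map_pow, Polynomial.map_X,
      Polynomial.map_C, Polynomial.map_C]
    simp only [RingEquiv.coe_toRingHom, RingHom.coe_coe, map_mul, map_pow, hE2C, hE2X]
  show Irreducible (E (MvPolynomial.C c * X 0 ^ n - MvPolynomial.C d * X 1 ^ m))
  rw [hE]
  have key := auxA F n m hn hm hco (c⁻¹ * d) (by simp [hc, hd])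
  have hassoc : Associated
      (Polynomial.X ^ n - Polynomial.C (Polynomial.C (c⁻¹ * d) * Polynomial.X ^ m) :
        (Polynomial F)[X])
      (Polynomial.C (Polynomial.C c) * Polynomial.X ^ n
        - Polynomial.C (Polynomial.C d * Polynomial.X ^ m)) := by
    refine ⟨Units.map (Polynomial.C.comp Polynomial.C :
      F →+* (Polynomial F)[X]).toMonoidHom (Units.mk0 c hc), ?_⟩
    have h1 : ((Units.map (Polynomial.C.comp Polynomial.C :
        F →+* (Polynomial F)[X]).toMonoidHom (Units.mk0 c hc) :
        ((Polynomial F)[X])ˣ) : (Polynomial F)[X])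
        = Polynomial.C (Polynomial.C c) := rfl
    rw [h1, sub_mul, mul_comm _ (Polynomial.C (Polynomial.C c)), ← map_mul]
    congr 2
    rw [mul_comm, ← mul_assoc, ← Polynomial.C_mul, mul_inv_cancel_left₀ hc]
  exact hassoc.irreducible key

open MvPolynomial in
lemma auxSub {σ R M : Type*} [CommRing R] [AddCommMonoid M] {w : σ → M}
    {φ ψ : MvPolynomial σ R} {n : M} (hφ : IsWeightedHomogeneous w φ n)
    (hψ : IsWeightedHomogeneous w ψ n) : IsWeightedHomogeneous w (φ - ψ) n := by
  intro d hd
  rw [coeff_sub] at hd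
  by_cases h : coeff d φ = 0
  · exact hψ (by intro h2; rw [h, h2, sub_zero] at hd; exact hd rfl)
  · exact hφ h

theorem stmt_17 (k : Type*) [Field k] [IsAlgClosed k]
    (a b : ℕ) (ha : 0 < a) (hb : 0 < b) (hab : Nat.Coprime a b) (u v : kˣ) :
    ∃ (q : MvPolynomial (Fin 2) k) (j : ℕ), Irreducible q ∧ 0 < j ∧
      MvPolynomial.IsWeightedHomogeneous (fun i : Fin 2 => if i = 0 then a else b) q j ∧
      {P : Fin 2 → k | MvPolynomial.eval P q = 0} =
        {P : Fin 2 → k | ∃ lam : kˣ, P = ![(lam : k) ^ a * u, (lam : k) ^ b * v]} ∪ {0} := by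
  classical
  set q : MvPolynomial (Fin 2) k :=
    MvPolynomial.C ((v : k) ^ a) * MvPolynomial.X 0 ^ b
      - MvPolynomial.C ((u : k) ^ b) * MvPolynomial.X 1 ^ a with hqdef
  refine ⟨q, a * b, ?_, Nat.mul_pos ha hb, ?_, ?_⟩
  · -- irreducibility
    have hodd : Odd a ∨ Odd b := by
      rcases Nat.even_or_odd a with h1 | h1
      · rcases Nat.even_or_odd b with h2 | h2
        · exfalso
          have : 2 ∣ Nat.gcd a b := Nat.dvd_gcd h1.two_dvd h2.two_dvd
          rw [hab] at this
          omega
        · exact Or.inr h2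
      · exact Or.inl h1
    have hu : (u : k) ^ b ≠ 0 := pow_ne_zero _ u.ne_zero
    have hv : (v : k) ^ a ≠ 0 := pow_ne_zero _ v.ne_zero
    rcases hodd with hodd | hodd
    · -- a odd : use swap
      have key := auxB k a b hodd hb hab ((u : k) ^ b) ((v : k) ^ a) hu hv
      let E : MvPolynomial (Fin 2) k ≃+* MvPolynomial (Fin 2) k :=
        (MvPolynomial.renameEquiv k (Equiv.swap (0 : Fin 2) 1)).toRingEquiv
      have key2 := (MulEquiv.irreducible_iff (E : MvPolynomial (Fin 2) k ≃* MvPolynomial (Fin 2) k)).mpr key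
      have hE : E (MvPolynomial.C ((u : k) ^ b) * MvPolynomial.X 0 ^ a
          - MvPolynomial.C ((v : k) ^ a) * MvPolynomial.X 1 ^ b) = -q := by
        show MvPolynomial.rename (Equiv.swap (0 : Fin 2) 1) _ = -q
        simp only [map_sub, map_mul, map_pow, MvPolynomial.rename_X,
          MvPolynomial.rename_C, Equiv.swap_apply_left, Equiv.swap_apply_right, hqdef]
        ring
      have key3 : Irreducible (-q) := by
        have : E (MvPolynomial.C ((u : k) ^ b) * MvPolynomial.X 0 ^ a
            - MvPolynomial.C ((v : k) ^ a) * MvPolynomial.X 1 ^ b) = -q := hE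
        rw [← this]
        exact key2
      have hassoc : Associated (-q) q := ⟨-1, by simp⟩
      exact hassoc.irreducible key3
    · -- b odd : direct
      exact auxB k b a hodd ha hab.symm ((v : k) ^ a) ((u : k) ^ b) hv hu
  · -- weighted homogeneous
    have h1 : (MvPolynomial.C ((v : k) ^ a) * MvPolynomial.X 0 ^ b
        : MvPolynomial (Fin 2) k) = MvPolynomial.monomial (Finsupp.single 0 b) ((v : k) ^ a) := by
      rw [MvPolynomial.C_mul_X_pow_eq_monomial]
    have h2 : (MvPolynomial.C ((u : k) ^ b) * MvPolynomial.X 1 ^ a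
        : MvPolynomial (Fin 2) k) = MvPolynomial.monomial (Finsupp.single 1 a) ((u : k) ^ b) := by
      rw [MvPolynomial.C_mul_X_pow_eq_monomial]
    rw [hqdef, h1, h2]
    apply auxSub
    · apply MvPolynomial.isWeightedHomogeneous_monomial
      rw [Finsupp.weight_apply, Finsupp.sum_single_index] <;> simp [mul_comm]
    · apply MvPolynomial.isWeightedHomogeneous_monomial
      rw [Finsupp.weight_apply, Finsupp.sum_single_index] <;> simp
  · -- zero set
    ext P
    simp only [Set.mem_setOf_eq, Set.mem_union, Set.mem_singleton_iff, hqdef, map_sub, map_mul,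
      map_pow, MvPolynomial.eval_C, MvPolynomial.eval_X]
    constructor
    · intro h
      have heq : (v : k) ^ a * P 0 ^ b = (u : k) ^ b * P 1 ^ a := by linear_combination h
      by_cases h0 : P 0 = 0
      · right
        have h1 : P 1 = 0 := by
          have : (u : k) ^ b * P 1 ^ a = 0 := by rw [← heq, h0, zero_pow hb.ne', mul_zero]
          have := (mul_eq_zero.mp this).resolve_left (pow_ne_zero _ u.ne_zero)
          exact pow_eq_zero_iff ha.ne' |>.mp this
        funext i
        fin_cases i <;> simp [h0, h1]
      · left
        have h1 : P 1 ≠ 0 := by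
          intro h1
          apply h0
          have : (v : k) ^ a * P 0 ^ b = 0 := by rw [heq, h1, zero_pow ha.ne', mul_zero]
          have := (mul_eq_zero.mp this).resolve_left (pow_ne_zero _ v.ne_zero)
          exact pow_eq_zero_iff hb.ne' |>.mp this
        set s : kˣ := Units.mk0 (P 0) h0 * u⁻¹ with hs
        set t : kˣ := Units.mk0 (P 1) h1 * v⁻¹ with ht
        have hst : s ^ b = t ^ a := by
          ext
          push_cast [hs, ht, Units.val_mk0]
          rw [mul_pow, mul_pow, inv_pow, inv_pow]
          field_simp
          linear_combination heq
        obtain ⟨M, N, hMN⟩ : ∃ M N : ℤ, (a : ℤ) * M + (b : ℤ) * N = 1 := by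
          refine ⟨Nat.gcdA a b, Nat.gcdB a b, ?_⟩
          have := Nat.gcd_eq_gcd_ab a b
          rw [hab] at this
          push_cast at this
          linarith
        refine ⟨s ^ M * t ^ N, ?_⟩
        have hsz : ∀ x : kˣ, x ^ ((b : ℤ) * M) = t ^ ((a : ℤ) * M) → True := fun _ _ => trivial
        have hla : (s ^ M * t ^ N) ^ (a : ℤ) = s := by
          rw [mul_zpow, ← zpow_mul, ← zpow_mul]
          have htza : t ^ (a : ℤ) = s ^ (b : ℤ) := by
            rw [zpow_natCast, zpow_natCast, hst]
          calc s ^ (M * (a : ℤ)) * t ^ (N * (a : ℤ))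
              = s ^ (M * (a : ℤ)) * (t ^ (a : ℤ)) ^ N := by rw [← zpow_mul, mul_comm N]
            _ = s ^ (M * (a : ℤ)) * s ^ ((b : ℤ) * N) := by rw [htza, ← zpow_mul]
            _ = s ^ (M * (a : ℤ) + (b : ℤ) * N) := by rw [← zpow_add]
            _ = s := by rw [show M * (a : ℤ) + (b : ℤ) * N = 1 by linarith, zpow_one]
        have hlb : (s ^ M * t ^ N) ^ (b : ℤ) = t := by
          rw [mul_zpow, ← zpow_mul, ← zpow_mul]
          have hszb : s ^ (b : ℤ) = t ^ (a : ℤ) := by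
            rw [zpow_natCast, zpow_natCast, hst]
          calc s ^ (M * (b : ℤ)) * t ^ (N * (b : ℤ))
              = (s ^ (b : ℤ)) ^ M * t ^ (N * (b : ℤ)) := by rw [← zpow_mul, mul_comm M]
            _ = t ^ ((a : ℤ) * M) * t ^ (N * (b : ℤ)) := by rw [hszb, ← zpow_mul]
            _ = t ^ ((a : ℤ) * M + N * (b : ℤ)) := by rw [← zpow_add]
            _ = t := by rw [show (a : ℤ) * M + N * (b : ℤ) = 1 by linarith, zpow_one]
        have hla' : ((s ^ M * t ^ N : kˣ) : k) ^ a = s := by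
          rw [← Units.val_pow_eq_pow_val, ← zpow_natCast, hla]
        have hlb' : ((s ^ M * t ^ N : kˣ) : k) ^ b = t := by
          rw [← Units.val_pow_eq_pow_val, ← zpow_natCast, hlb]
        funext i
        fin_cases i
        · show P 0 = _
          simp only [Matrix.cons_val_zero, hla']
          rw [hs]
          push_cast [Units.val_mk0]
          field_simp
        · show P 1 = _
          simp only [Matrix.cons_val_one, Matrix.head_cons, hlb']
          rw [ht]
          push_cast [Units.val_mk0]
          field_simp
    · rintro (⟨lam, rfl⟩ | rfl)
      · simp only [Matrix.cons_val_zero, Matrix.cons_val_one, Matrix.head_cons]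
        ring
      · simp only [Pi.zero_apply, zero_pow ha.ne', zero_pow hb.ne', mul_zero, sub_zero,
          sub_self]
end

section
/- Let n ≥ 5, let k ≥ 1 divide n, and consider the group C = ℤ/k × K^× for a field K, with automorphisms τ : (i, x) ↦ (−i, x^{−1}) and u_ζ : (i, x) ↦ (i, ζ^i·x) for ζ ∈ K a k-th root of unity. Suppose P = (i, x) ∈ C is an element of exact order n such that i generates ℤ/k. Then: (a) if u_ζ(P) = P then ζ = 1; and (b) if (τ ∘ u_ζ)(P) = P then x⁴ = 1 and P has order dividing 4·gcd(2,k) — contradicting order n ≥ 5. Hence P is fixed by no nontrivial automorphism of the form u_ζ or τ∘u_ζ. -/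
/-!
If `u_ζ` fixes `P = (i, x)` then `ζ ^ i = 1`; as `i` generates `ℤ/k` it is prime to `k`, so
`ζ ^ k = 1` forces `ζ = 1`. If `τ ∘ u_ζ` fixes `P` then `2 i = 0` and `ζ ^ i x² = 1`; now `k ∣ 2 i`
gives `ζ ^ (2 i) = 1`, hence `x⁴ = 1`, and `P` has order dividing `4 < n`.
-/

/-- The automorphism `u_ζ : (i, x) ↦ (i, ζ^i · x)` of the smooth part
`ℤ/k × K^×` of a Néron `k`-gon. -/
def neronU (k : ℕ) (K : Type*) [Field K] (ζ : Kˣ) :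
    Multiplicative (ZMod k) × Kˣ → Multiplicative (ZMod k) × Kˣ :=
  fun P => (P.1, ζ ^ (Multiplicative.toAdd P.1).val * P.2)

/-- The automorphism `τ : (i, x) ↦ (−i, x⁻¹)`. -/
def neronTau (k : ℕ) (K : Type*) [Field K] :
    Multiplicative (ZMod k) × Kˣ → Multiplicative (ZMod k) × Kˣ :=
  fun P => (P.1⁻¹, P.2⁻¹)

namespace ZMod

variable {k : ℕ} [NeZero k]

theorem coprime_val_of_zmultiples_eq_top {i : ZMod k} (h : AddSubgroup.zmultiples i = ⊤) :
    k.Coprime i.val := by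
  have hord := addOrderOf_eq_card_of_zmultiples_eq_top h
  rw [Nat.card_zmod, ← natCast_zmod_val i, addOrderOf_coe _ (NeZero.ne k)] at hord
  simpa [NeZero.ne k] using Nat.div_eq_self.mp hord

theorem pow_val_pow_eq_one_of_nsmul_eq_zero {M : Type*} [Monoid M] {ζ : M} (hζ : ζ ^ k = 1)
    {i : ZMod k} {m : ℕ} (h : m • i = 0) : (ζ ^ i.val) ^ m = 1 := by
  obtain ⟨c, hc⟩ : k ∣ i.val * m := by
    rw [← natCast_eq_zero_iff, Nat.cast_mul, natCast_zmod_val, mul_comm, ← nsmul_eq_mul, h]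
  rw [← pow_mul, hc, pow_mul, hζ, one_pow]

theorem eq_one_of_pow_val_eq_one {M : Type*} [Monoid M] {ζ : M} (hζ : ζ ^ k = 1)
    {i : ZMod k} (hgen : AddSubgroup.zmultiples i = ⊤) (h : ζ ^ i.val = 1) : ζ = 1 := by
  have := pow_gcd_eq_one.mpr ⟨hζ, h⟩
  rwa [coprime_val_of_zmultiples_eq_top hgen, pow_one] at this

end ZMod

section Neron

variable {k : ℕ} {K : Type*} [Field K] {ζ : Kˣ} {P : Multiplicative (ZMod k) × Kˣ}

theorem neronU_eq_self_iff :
    neronU k K ζ P = P ↔ ζ ^ (Multiplicative.toAdd P.1).val = 1 := by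
  simp [neronU, Prod.ext_iff]

theorem neronTau_neronU_eq_self_iff :
    neronTau k K (neronU k K ζ P) = P ↔
      P.1 ^ 2 = 1 ∧ ζ ^ (Multiplicative.toAdd P.1).val * P.2 ^ 2 = 1 := by
  simp only [neronTau, neronU, Prod.ext_iff, inv_eq_iff_mul_eq_one, sq, mul_assoc]

theorem pow_four_eq_one_of_neronTau_neronU_eq_self [NeZero k] (hζ : ζ ^ k = 1)
    (h : neronTau k K (neronU k K ζ P) = P) : P.2 ^ 4 = 1 := by
  obtain ⟨h1, h2⟩ := neronTau_neronU_eq_self_iff.mp h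
  have h2i : 2 • Multiplicative.toAdd P.1 = 0 := by
    rw [← toAdd_pow, h1, toAdd_one]
  have := ZMod.pow_val_pow_eq_one_of_nsmul_eq_zero hζ h2i
  rwa [eq_inv_of_mul_eq_one_left h2, inv_pow, inv_eq_one, ← pow_mul] at this

theorem orderOf_dvd_four_of_neronTau_neronU_eq_self [NeZero k] (hζ : ζ ^ k = 1)
    (h : neronTau k K (neronU k K ζ P) = P) : orderOf P ∣ 4 := by
  rw [Prod.orderOf]
  exact Nat.lcm_dvd
    ((orderOf_dvd_of_pow_eq_one (neronTau_neronU_eq_self_iff.mp h).1).trans (by norm_num))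
    (orderOf_dvd_of_pow_eq_one (pow_four_eq_one_of_neronTau_neronU_eq_self hζ h))

end Neron

theorem stmt_18_general (K : Type*) [Field K] (n k : ℕ) (hk : 1 ≤ k) (hn : 5 ≤ n)
    (P : Multiplicative (ZMod k) × Kˣ) (hP : orderOf P = n)
    (hgen : AddSubgroup.zmultiples (Multiplicative.toAdd P.1) = ⊤) :
    (∀ ζ : Kˣ, ζ ^ k = 1 → neronU k K ζ P = P → ζ = 1) ∧
    (∀ ζ : Kˣ, ζ ^ k = 1 → neronTau k K (neronU k K ζ P) = P →
        P.2 ^ 4 = 1 ∧ orderOf P ∣ 4 * Nat.gcd 2 k) ∧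
    (∀ ζ : Kˣ, ζ ^ k = 1 → neronTau k K (neronU k K ζ P) ≠ P) := by
  have : NeZero k := NeZero.of_pos hk
  refine ⟨fun ζ hζ h ↦ ZMod.eq_one_of_pow_val_eq_one hζ hgen (neronU_eq_self_iff.mp h),
    fun ζ hζ h ↦ ⟨pow_four_eq_one_of_neronTau_neronU_eq_self hζ h,
      (orderOf_dvd_four_of_neronTau_neronU_eq_self hζ h).trans (dvd_mul_right 4 _)⟩,
    fun ζ hζ h ↦ ?_⟩
  have := Nat.le_of_dvd four_pos (hP ▸ orderOf_dvd_four_of_neronTau_neronU_eq_self hζ h)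
  omega

theorem stmt_18 (K : Type*) [Field K] (n k : ℕ) (hk : 1 ≤ k) (hkn : k ∣ n) (hn : 5 ≤ n)
    (P : Multiplicative (ZMod k) × Kˣ) (hP : orderOf P = n)
    (hgen : AddSubgroup.zmultiples (Multiplicative.toAdd P.1) = ⊤) :
    (∀ ζ : Kˣ, ζ ^ k = 1 → neronU k K ζ P = P → ζ = 1) ∧
    (∀ ζ : Kˣ, ζ ^ k = 1 → neronTau k K (neronU k K ζ P) = P →
        P.2 ^ 4 = 1 ∧ orderOf P ∣ 4 * Nat.gcd 2 k) ∧
    (∀ ζ : Kˣ, ζ ^ k = 1 → neronTau k K (neronU k K ζ P) ≠ P) :=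
  stmt_18_general K n k hk hn P hP hgen
end
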